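/- arXiv:1704.01321 — 2 statements merged into one kernel-verified Lean document; each statement's English description precedes it below -/
import Mathlib

section
/- Let ϖ : sl_n(ℂ)³ → ℝ be the alternating 3-form ϖ(A,B,C) = 2i·tr(q(A)[q(B),q(C)]), where q(A) = (A + A*)/2 is the projection onto Hermitian traceless matrices, and let β : b_n × b_n → ℝ be β(x,y) = (i/4)·tr(x_u* y_u − x_u y_u*) on the Borel subalgebra b_n of upper-triangular traceless matrices, where x_u is the strictly upper-triangular part. Then the Chevalley–Eilenberg differential of β equals the restriction of ϖ to b_n: for all x,y,z ∈ b_n, −β([x,y],z) + β([x,z],y) − β([y,z],x) = ϖ(x,y,z). -/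
open Matrix Complex

/-- The strictly upper-triangular part of a matrix. -/
def strictUpper (n : ℕ) (x : Matrix (Fin n) (Fin n) ℂ) : Matrix (Fin n) (Fin n) ℂ :=
  Matrix.of fun k l => if (k : ℕ) < (l : ℕ) then x k l else 0

/-- The form `β(x,y) = (i/4)·tr(x_uᴴ y_u − x_u y_uᴴ)` on the Borel subalgebra. -/
noncomputable def betaForm (n : ℕ) (x y : Matrix (Fin n) (Fin n) ℂ) : ℂ :=
  Complex.I / 4 *
    ((strictUpper n x)ᴴ * strictUpper n y - strictUpper n x * (strictUpper n y)ᴴ).trace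

/-- The Hermitian projection `q(A) = (A + Aᴴ)/2`. -/
noncomputable def qHerm (n : ℕ) (A : Matrix (Fin n) (Fin n) ℂ) : Matrix (Fin n) (Fin n) ℂ :=
  ((1 : ℂ) / 2) • (A + Aᴴ)

/-- The volume 3-form `ϖ(A,B,C) = 2i·tr(q(A)[q(B),q(C)])`. -/
noncomputable def varpi (n : ℕ) (A B C : Matrix (Fin n) (Fin n) ℂ) : ℂ :=
  2 * Complex.I * (qHerm n A * (qHerm n B * qHerm n C - qHerm n C * qHerm n B)).trace

/-!
Dropping the projections `x ↦ x_u` extends `β` to the form `β̃(W,v) = (i/4)·tr(W*v − Wv*)` on all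
of `gl_n`, whose Chevalley–Eilenberg differential is, by cyclicity of the trace, `ϖ` minus
`(i/4)·(tr(x[y,z]) + tr(x*[y*,z*]))`. On `b_n` the projections do not matter, because brackets of
upper-triangular matrices are strictly upper triangular and `tr(W* v_u) = tr(W* v)` for strictly
upper-triangular `W`. The extra terms vanish: `tr(x*[y*,z*])` is the conjugate of `tr(x[z,y])`,
and `x[y,z]` has the diagonal of `x` times that of `[y,z]`, which is zero.
-/

namespace Matrix

variable {m α R : Type*} [Fintype m] [LinearOrder α] {b : m → α}

theorem BlockTriangular.diag_mul [NonUnitalNonAssocSemiring R] (hb : Function.Injective b)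
    {M N : Matrix m m R} (hM : M.BlockTriangular b) (hN : N.BlockTriangular b) :
    (M * N).diag = M.diag * N.diag := by
  ext i
  refine (Finset.sum_eq_single i (fun k _ hki => ?_) (by simp)).trans rfl
  rcases (hb.ne hki).lt_or_gt with hk | hk
  · simp [hM hk]
  · simp [hN hk]

theorem BlockTriangular.diag_commutator_eq_zero [NonUnitalNonAssocCommRing R]
    (hb : Function.Injective b) {M N : Matrix m m R} (hM : M.BlockTriangular b)
    (hN : N.BlockTriangular b) : (M * N - N * M).diag = 0 := by
  rw [diag_sub, hM.diag_mul hb hN, hN.diag_mul hb hM, mul_comm, sub_self]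

theorem BlockTriangular.trace_mul_commutator_eq_zero [NonUnitalNonAssocCommRing R]
    (hb : Function.Injective b) {L M N : Matrix m m R} (hL : L.BlockTriangular b)
    (hM : M.BlockTriangular b) (hN : N.BlockTriangular b) :
    (L * (M * N - N * M)).trace = 0 := by
  rw [trace, hL.diag_mul hb ((hM.mul hN).sub (hN.mul hM)), hM.diag_commutator_eq_zero hb hN,
    mul_zero]
  exact Finset.sum_const_zero

theorem trace_conjTranspose_mul_commutator [NonUnitalCommRing R] [StarRing R]
    (L M N : Matrix m m R) :
    (Lᴴ * (Mᴴ * Nᴴ - Nᴴ * Mᴴ)).trace = star (L * (N * M - M * N)).trace := by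
  rw [← conjTranspose_mul, ← conjTranspose_mul, ← conjTranspose_sub, ← conjTranspose_mul,
    trace_conjTranspose, trace_mul_comm]

end Matrix

theorem strictUpper_eq_self {n : ℕ} {W : Matrix (Fin n) (Fin n) ℂ} (hW : W.BlockTriangular id)
    (hd : W.diag = 0) : strictUpper n W = W := by
  ext k l
  simp only [strictUpper, of_apply, ite_eq_left_iff, not_lt]
  intro hlk
  rcases hlk.lt_or_eq with h | h
  · exact (hW h).symm
  · rw [Fin.ext h]
    exact (congrFun hd k).symm

/-- Equals `-(1/2)·Im tr(Wᴴ v)`. -/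
noncomputable def imTraceForm {m : Type*} [Fintype m] (W v : Matrix m m ℂ) : ℂ :=
  I / 4 * (Wᴴ * v - W * vᴴ).trace

theorem betaForm_eq_imTraceForm (n : ℕ) (x y : Matrix (Fin n) (Fin n) ℂ) :
    betaForm n x y = imTraceForm (strictUpper n x) (strictUpper n y) :=
  rfl

theorem imTraceForm_strictUpper_right (n : ℕ) (W v : Matrix (Fin n) (Fin n) ℂ) :
    imTraceForm (strictUpper n W) (strictUpper n v) = imTraceForm (strictUpper n W) v := by
  unfold imTraceForm trace
  refine congrArg (I / 4 * ·) (Finset.sum_congr rfl fun k _ => ?_)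
  simp only [diag_apply, Matrix.sub_apply, mul_apply, conjTranspose_apply, strictUpper, of_apply]
  congr 1 <;> refine Finset.sum_congr rfl fun j _ => ?_ <;> split_ifs <;> simp

theorem betaForm_commutator {n : ℕ} {x y : Matrix (Fin n) (Fin n) ℂ}
    (hx : x.BlockTriangular id) (hy : y.BlockTriangular id) (v : Matrix (Fin n) (Fin n) ℂ) :
    betaForm n (x * y - y * x) v = imTraceForm (x * y - y * x) v := by
  rw [betaForm_eq_imTraceForm, imTraceForm_strictUpper_right,
    strictUpper_eq_self ((hx.mul hy).sub (hy.mul hx))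
      (hx.diag_commutator_eq_zero Function.injective_id hy)]

theorem imTraceForm_coboundary_eq (n : ℕ) (x y z : Matrix (Fin n) (Fin n) ℂ) :
    -imTraceForm (x * y - y * x) z + imTraceForm (x * z - z * x) y -
        imTraceForm (y * z - z * y) x =
      varpi n x y z -
        I / 4 * ((x * (y * z - z * y)).trace + (xᴴ * (yᴴ * zᴴ - zᴴ * yᴴ)).trace) := by
  have cyc (a b c : Matrix (Fin n) (Fin n) ℂ) : (a * (b * c)).trace = (b * (c * a)).trace := by
    rw [trace_mul_comm a, Matrix.mul_assoc]
  simp only [imTraceForm, varpi, qHerm, conjTranspose_sub, conjTranspose_mul, smul_add, add_mul,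
    mul_add, Matrix.smul_mul, Matrix.mul_smul, mul_sub, sub_mul, trace_add, trace_sub, trace_smul,
    Matrix.mul_assoc, smul_eq_mul]
  linear_combination (I / 4) *
    (-cyc y x zᴴ + cyc z x yᴴ - cyc x yᴴ zᴴ + cyc x zᴴ yᴴ - cyc xᴴ y z + cyc xᴴ z y +
      cyc zᴴ xᴴ y - cyc yᴴ xᴴ z)

theorem d_betaForm_eq_varpi_general (n : ℕ) (x y z : Matrix (Fin n) (Fin n) ℂ)
    (hx : ∀ k l : Fin n, (l : ℕ) < (k : ℕ) → x k l = 0)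
    (hy : ∀ k l : Fin n, (l : ℕ) < (k : ℕ) → y k l = 0)
    (hz : ∀ k l : Fin n, (l : ℕ) < (k : ℕ) → z k l = 0) :
    -betaForm n (x * y - y * x) z + betaForm n (x * z - z * x) y -
        betaForm n (y * z - z * y) x =
      varpi n x y z := by
  have hx : x.BlockTriangular id := fun _ _ h => hx _ _ h
  have hy : y.BlockTriangular id := fun _ _ h => hy _ _ h
  have hz : z.BlockTriangular id := fun _ _ h => hz _ _ h
  have hinj : Function.Injective (id : Fin n → Fin n) := Function.injective_id
  rw [betaForm_commutator hx hy, betaForm_commutator hx hz, betaForm_commutator hy hz,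
    imTraceForm_coboundary_eq, trace_conjTranspose_mul_commutator,
    hx.trace_mul_commutator_eq_zero hinj hy hz, hx.trace_mul_commutator_eq_zero hinj hz hy]
  simp

/-- The Chevalley–Eilenberg differential of `β` equals the restriction of `ϖ`
to the Borel subalgebra of upper-triangular traceless matrices. -/
theorem d_betaForm_eq_varpi (n : ℕ) (x y z : Matrix (Fin n) (Fin n) ℂ)
    (hx : ∀ k l : Fin n, (l : ℕ) < (k : ℕ) → x k l = 0) (hxt : x.trace = 0)
    (hy : ∀ k l : Fin n, (l : ℕ) < (k : ℕ) → y k l = 0) (hyt : y.trace = 0)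
    (hz : ∀ k l : Fin n, (l : ℕ) < (k : ℕ) → z k l = 0) (hzt : z.trace = 0) :
    -betaForm n (x * y - y * x) z + betaForm n (x * z - z * x) y -
        betaForm n (y * z - z * y) x =
      varpi n x y z :=
  d_betaForm_eq_varpi_general n x y z hx hy hz
end

section
/- Let V be a vector space over a field k with a family A of commuting-with-differential endomorphisms making V completely reducible as an A-module. Let V^♯ = {v ∈ V : Xv = 0 for all X ∈ A} and V⁰ the span of {Xv : X ∈ A, v ∈ V}. Then V = V^♯ ⊕ V⁰. -/
/-!
Write `K = ⨅ X ∈ A, ker X` and `R = ⨆ X ∈ A, range X`. An `A`-invariant `W` disjoint from `R`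
lies in `K`, since `X w ∈ W ⊓ R`; an `A`-invariant `C` supplementing some `W ≤ K` contains `R`,
since `X (W ⊔ C) = X W ⊔ X C ≤ C`. A complement of `R` thus lies in `K`, giving `K ⊔ R = ⊤`; a
complement of `K ⊓ R` contains `R ≥ K ⊓ R`, giving `K ⊓ R = ⊥`.
-/

namespace Submodule

variable {R M : Type*} [Semiring R] [AddCommMonoid M] [Module R M] {A : Set (M →ₗ[R] M)}

theorem map_eq_bot_of_le_biInf_ker {W : Submodule R M} (hW : W ≤ ⨅ X ∈ A, LinearMap.ker X)
    {X : M →ₗ[R] M} (hX : X ∈ A) : W.map X = ⊥ :=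
  LinearMap.le_ker_iff_map.mp (hW.trans (biInf_le (fun X => LinearMap.ker X) hX))

theorem map_biSup_range_le {X : M →ₗ[R] M} (hX : X ∈ A) :
    (⨆ Y ∈ A, LinearMap.range Y).map X ≤ ⨆ Y ∈ A, LinearMap.range Y :=
  LinearMap.map_le_range.trans (le_biSup (fun Y => LinearMap.range Y) hX)

theorem le_biInf_ker_of_disjoint_biSup_range {W : Submodule R M}
    (hW : ∀ X ∈ A, W.map X ≤ W) (hdisj : Disjoint W (⨆ X ∈ A, LinearMap.range X)) :
    W ≤ ⨅ X ∈ A, LinearMap.ker X := by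
  refine le_iInf₂ fun X hX w hw => ?_
  have hXw_range : X w ∈ ⨆ Y ∈ A, LinearMap.range Y :=
    le_biSup (fun Y => LinearMap.range Y) hX (LinearMap.mem_range_self X w)
  exact (disjoint_def.mp hdisj) (X w) (hW X hX (mem_map_of_mem hw)) hXw_range

theorem biSup_range_le_of_codisjoint {W C : Submodule R M}
    (hWK : W ≤ ⨅ X ∈ A, LinearMap.ker X) (hC : ∀ X ∈ A, C.map X ≤ C) (hcod : Codisjoint W C) :
    ⨆ X ∈ A, LinearMap.range X ≤ C := by
  refine iSup₂_le fun X hX => ?_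
  calc LinearMap.range X = (W ⊔ C).map X := by rw [hcod.eq_top, map_top]
    _ = C.map X := by rw [map_sup, map_eq_bot_of_le_biInf_ker hWK hX, bot_sup_eq]
    _ ≤ C := hC X hX

end Submodule

open Submodule in
/-- Cartier's lemma (part 1): if `V` is completely reducible with respect to a
family `A` of endomorphisms, then `V = V^♯ ⊕ V⁰`, where
`V^♯ = {v : Xv = 0 for all X ∈ A}` and `V⁰` is spanned by the `Xv`. -/
theorem cartier_decomposition (k : Type*) [Field k] (V : Type*) [AddCommGroup V]
    [Module k V] (A : Set (V →ₗ[k] V))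
    (hsemisimple : ∀ W : Submodule k V, (∀ X ∈ A, W.map X ≤ W) →
      ∃ W' : Submodule k V, (∀ X ∈ A, W'.map X ≤ W') ∧ IsCompl W W') :
    IsCompl (⨅ X ∈ A, LinearMap.ker X) (⨆ X ∈ A, LinearMap.range X) := by
  set K : Submodule k V := ⨅ X ∈ A, LinearMap.ker X
  set R : Submodule k V := ⨆ X ∈ A, LinearMap.range X
  constructor
  · have hD_le_K : K ⊓ R ≤ K := inf_le_left
    have hD_inv : ∀ X ∈ A, (K ⊓ R).map X ≤ K ⊓ R := fun X hX =>
      (map_eq_bot_of_le_biInf_ker hD_le_K hX).trans_le bot_le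
    obtain ⟨C, hC_inv, hC⟩ := hsemisimple (K ⊓ R) hD_inv
    have hR_le_C : R ≤ C := biSup_range_le_of_codisjoint hD_le_K hC_inv hC.codisjoint
    exact disjoint_iff.mpr (hC.disjoint.eq_bot_of_le (inf_le_right.trans hR_le_C))
  · obtain ⟨W, hW_inv, hW⟩ := hsemisimple R fun X hX => map_biSup_range_le hX
    have hW_le_K : W ≤ K := le_biInf_ker_of_disjoint_biSup_range hW_inv hW.disjoint.symm
    exact (hW.codisjoint.mono_right hW_le_K).symm
end
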